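/- If q is not a root of unity, then for all admissible j, j' (one half-integral, one integral) and all ε1, ε2, ε3 ∈ {+1, −1}, the nonclassical-type representation R^{(ε1,ε2,ε3)}_{jj'} of U'_q(so_4) is irreducible: its representation space has no invariant subspaces other than 0 and the whole space. -/

import Mathlib

noncomputable section

open Classical

/-- Generators of `U'_q(so_4)`. -/
inductive SO4Gen : Type
  | g21 | g32 | g43

open FreeAlgebra in
/-- Defining relations of `U'_q(so_4)`. -/
inductive SO4Rel (q : ℂ) : FreeAlgebra ℂ SO4Gen → FreeAlgebra ℂ SO4Gen → Prop
  | r1 : SO4Rel q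
      (ι ℂ SO4Gen.g21 * (ι ℂ SO4Gen.g32)^2 - (q + q⁻¹) • (ι ℂ SO4Gen.g32 * ι ℂ SO4Gen.g21 * ι ℂ SO4Gen.g32)
        + (ι ℂ SO4Gen.g32)^2 * ι ℂ SO4Gen.g21) (-(ι ℂ SO4Gen.g21))
  | r2 : SO4Rel q
      (ι ℂ SO4Gen.g32 * (ι ℂ SO4Gen.g21)^2 - (q + q⁻¹) • (ι ℂ SO4Gen.g21 * ι ℂ SO4Gen.g32 * ι ℂ SO4Gen.g21)
        + (ι ℂ SO4Gen.g21)^2 * ι ℂ SO4Gen.g32) (-(ι ℂ SO4Gen.g32))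
  | r3 : SO4Rel q
      (ι ℂ SO4Gen.g32 * (ι ℂ SO4Gen.g43)^2 - (q + q⁻¹) • (ι ℂ SO4Gen.g43 * ι ℂ SO4Gen.g32 * ι ℂ SO4Gen.g43)
        + (ι ℂ SO4Gen.g43)^2 * ι ℂ SO4Gen.g32) (-(ι ℂ SO4Gen.g32))
  | r4 : SO4Rel q
      (ι ℂ SO4Gen.g43 * (ι ℂ SO4Gen.g32)^2 - (q + q⁻¹) • (ι ℂ SO4Gen.g32 * ι ℂ SO4Gen.g43 * ι ℂ SO4Gen.g32)
        + (ι ℂ SO4Gen.g32)^2 * ι ℂ SO4Gen.g43) (-(ι ℂ SO4Gen.g43))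
  | r5 : SO4Rel q (ι ℂ SO4Gen.g21 * ι ℂ SO4Gen.g43) (ι ℂ SO4Gen.g43 * ι ℂ SO4Gen.g21)

/-- The algebra `U'_q(so_4)`. -/
abbrev UqSO4 (q : ℂ) : Type := RingQuot (SO4Rel q)

/-- The generator `I_21` of `U'_q(so_4)`. -/
def J21 (q : ℂ) : UqSO4 q := RingQuot.mkAlgHom ℂ (SO4Rel q) (FreeAlgebra.ι ℂ SO4Gen.g21)
/-- The generator `I_32` of `U'_q(so_4)`. -/
def J32 (q : ℂ) : UqSO4 q := RingQuot.mkAlgHom ℂ (SO4Rel q) (FreeAlgebra.ι ℂ SO4Gen.g32)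
/-- The generator `I_43` of `U'_q(so_4)`. -/
def J43 (q : ℂ) : UqSO4 q := RingQuot.mkAlgHom ℂ (SO4Rel q) (FreeAlgebra.ι ℂ SO4Gen.g43)

/-- q-commutator `[a,b]_q = q^{1/2} a b - q^{-1/2} b a`, where `s = q^{1/2}`. -/
def qbr {A : Type} [Ring A] [Algebra ℂ A] (s : ℂ) (a b : A) : A := s • (a * b) - s⁻¹ • (b * a)

/-- q-commutator `[a,b]_{q⁻¹} = q^{-1/2} a b - q^{1/2} b a`, where `s = q^{1/2}`. -/
def qbrInv {A : Type} [Ring A] [Algebra ℂ A] (s : ℂ) (a b : A) : A := s⁻¹ • (a * b) - s • (b * a)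

def J31 (q s : ℂ) : UqSO4 q := qbr s (J21 q) (J32 q)
def J42 (q s : ℂ) : UqSO4 q := qbr s (J32 q) (J43 q)
def J41 (q s : ℂ) : UqSO4 q := qbr s (J31 q s) (J43 q)
def J31m (q s : ℂ) : UqSO4 q := qbrInv s (J21 q) (J32 q)
def J42m (q s : ℂ) : UqSO4 q := qbrInv s (J32 q) (J43 q)
def J41m (q s : ℂ) : UqSO4 q := qbrInv s (J31 q s) (J43 q)

/-- The Casimir element `C_4`. -/
def C4 (q s : ℂ) : UqSO4 q :=
  q⁻¹ • (J21 q * J43 q) - J31 q s * J42 q s + q • (J32 q * J41 q s)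

/-- The Casimir element `C'_4`. -/
def C4' (q s : ℂ) : UqSO4 q :=
  (q⁻¹)^2 • (J21 q)^2 + (J32 q)^2 + q^2 • (J43 q)^2 + q⁻¹ • (J31 q s * J31m q s)
    + q • (J42 q s * J42m q s) + J41 q s * J41m q s

/-- The q-number `[a]` for the half-integer `a/2` (argument is the doubled half-integer). -/
def qNum (q s : ℂ) (a : ℤ) : ℂ := (s ^ a - s ^ (-a)) / (q - q⁻¹)

/-- The "plus" q-number `[a]_+` for the half-integer `a/2` (doubled argument). -/
def qNumP (q s : ℂ) (a : ℤ) : ℂ := (s ^ a + s ^ (-a)) / (q - q⁻¹)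

/-- Basis "delta" vector of the function space on a finite index set `S ⊆ ℤ × ℤ`;
for `p ∉ S` this is the zero vector (out-of-range basis vectors are `0`). -/
def bvec (S : Finset (ℤ × ℤ)) (p : ℤ × ℤ) : (↥S → ℂ) :=
  fun b => if (b : ℤ × ℤ) = p then 1 else 0

/-- Index set `{(k,l) : |k| ≤ j, k ≡ j, |l| ≤ j', l ≡ j'}` for the classical-type
representation `R_{jj'}` (all indices are doubled half-integers). -/
def clSupp (j j' : ℤ) : Finset (ℤ × ℤ) :=
  ((Finset.Icc (-j) j) ×ˢ (Finset.Icc (-j') j')).filter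
    (fun p => (j - p.1) % 2 = 0 ∧ (j' - p.2) % 2 = 0)

/-- Index set for the nonclassical-type representations (doubled half-integers):
`k ∈ {1/2, …, j}`, `l ∈ {−j', …, j'}` if `j` is half-integral, and
`k ∈ {−j, …, j}`, `l ∈ {1/2, …, j'}` if `j'` is half-integral. -/
def nclSupp (j j' : ℤ) : Finset (ℤ × ℤ) :=
  if j % 2 = 1 then
    ((Finset.Icc 1 j) ×ˢ (Finset.Icc (-j') j')).filter
      (fun p => p.1 % 2 = 1 ∧ p.2 % 2 = 0)
  else
    ((Finset.Icc (-j) j) ×ˢ (Finset.Icc 1 j')).filter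
      (fun p => p.1 % 2 = 0 ∧ p.2 % 2 = 1)

/-- Admissibility of the parameters `(j, j')` for the nonclassical-type representations:
one of them is half-integral and the other is integral (doubled convention: one is odd and
one is even), `j ≥ 0`, `j' ≥ 0`. -/
def Adm (j j' : ℤ) : Prop :=
  (j % 2 = 1 ∧ j' % 2 = 0 ∧ 1 ≤ j ∧ 0 ≤ j') ∨ (j % 2 = 0 ∧ j' % 2 = 1 ∧ 0 ≤ j ∧ 1 ≤ j')

/-- The formulas (31)–(33) for the classical-type representation `R_{jj'}` of
`U'_q(so_4)` (all indices doubled: `|k,l⟩` is `bvec (clSupp j j') (k, l)`). -/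
def IsClRep (q s : ℂ) (j j' : ℤ)
    (R : UqSO4 q →ₐ[ℂ] Module.End ℂ (↥(clSupp j j') → ℂ)) : Prop :=
  ∀ k l : ℤ, (k, l) ∈ clSupp j j' →
    R (J21 q) (bvec (clSupp j j') (k, l)) =
      (Complex.I * qNum q s (k + l)) • bvec (clSupp j j') (k, l) ∧
    R (J43 q) (bvec (clSupp j j') (k, l)) =
      (Complex.I * qNum q s (k - l)) • bvec (clSupp j j') (k, l) ∧
    R (J32 q) (bvec (clSupp j j') (k, l)) =
      ((s ^ (k + l) + s ^ (-(k + l))) * (s ^ (k - l) + s ^ (-(k - l))))⁻¹ •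
        ( (-((s ^ (j - l) + s ^ (-(j - l))) * qNum q s (j' - l))) • bvec (clSupp j j') (k, l + 2)
        + ((s ^ (j + l) + s ^ (-(j + l))) * qNum q s (j' + l)) • bvec (clSupp j j') (k, l - 2)
        + ((s ^ (j' - k) + s ^ (-(j' - k))) * qNum q s (j - k)) • bvec (clSupp j j') (k + 2, l)
        - ((s ^ (j' + k) + s ^ (-(j' + k))) * qNum q s (j + k)) • bvec (clSupp j j') (k - 2, l))

/-- The formulas (50)–(54) for the nonclassical-type representation
`R^{(ε1,ε2,ε3)}_{jj'}` of `U'_q(so_4)` (all indices doubled: `|k,l⟩` is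
`bvec (nclSupp j j') (k, l)`; `(−1)^l` is `(−1)^(l/2)` for the doubled `l`). -/
def IsNclRep (q s ε1 ε2 ε3 : ℂ) (j j' : ℤ)
    (R : UqSO4 q →ₐ[ℂ] Module.End ℂ (↥(nclSupp j j') → ℂ)) : Prop :=
  (∀ k l : ℤ, (k, l) ∈ nclSupp j j' →
      R (J21 q) (bvec (nclSupp j j') (k, l)) =
        (ε1 * qNumP q s (k + l)) • bvec (nclSupp j j') (k, l) ∧
      R (J43 q) (bvec (nclSupp j j') (k, l)) =
        (ε2 * qNumP q s (k - l)) • bvec (nclSupp j j') (k, l)) ∧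
  (∀ k l : ℤ, (k, l) ∈ nclSupp j j' → k ≠ 1 → l ≠ 1 →
      R (J32 q) (bvec (nclSupp j j') (k, l)) =
        (qNum q s (k + l) * qNum q s (k - l) * (q - q⁻¹))⁻¹ •
          ( (-(Complex.I * (qNum q s (j' - l) * qNum q s (j - l)))) • bvec (nclSupp j j') (k, l + 2)
          + (Complex.I * (qNum q s (j' + l) * qNum q s (j + l))) • bvec (nclSupp j j') (k, l - 2)
          + (-(Complex.I * (qNum q s (j' - k) * qNum q s (j - k)))) • bvec (nclSupp j j') (k + 2, l)
          + (Complex.I * (qNum q s (j' + k) * qNum q s (j + k))) • bvec (nclSupp j j') (k - 2, l))) ∧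
  (j % 2 = 1 → ∀ l : ℤ, (1, l) ∈ nclSupp j j' →
      R (J32 q) (bvec (nclSupp j j') (1, l)) =
        (qNum q s (l + 1) * qNum q s (l - 1) * (q - q⁻¹))⁻¹ •
          ( (-(Complex.I * (qNum q s (j - l) * qNum q s (j' - l)))) • bvec (nclSupp j j') (1, l + 2)
          + (Complex.I * (qNum q s (j + l) * qNum q s (j' + l))) • bvec (nclSupp j j') (1, l - 2)
          + (-(Complex.I * (qNum q s (j' - 1) * qNum q s (j - 1)))) • bvec (nclSupp j j') (3, l)
          + (Complex.I * (qNum q s (j' + 1) * qNum q s (j + 1)) * ε3 * (-1 : ℂ) ^ (l / 2)) •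
              bvec (nclSupp j j') (1, -l))) ∧
  (j' % 2 = 1 → ∀ k : ℤ, (k, 1) ∈ nclSupp j j' →
      R (J32 q) (bvec (nclSupp j j') (k, 1)) =
        (qNum q s (k + 1) * qNum q s (k - 1) * (q - q⁻¹))⁻¹ •
          ( (-(Complex.I * (qNum q s (j - 1) * qNum q s (j' - 1)))) • bvec (nclSupp j j') (k, 3)
          + (Complex.I * (qNum q s (j + 1) * qNum q s (j' + 1)) * ε3 * (-1 : ℂ) ^ (k / 2)) •
              bvec (nclSupp j j') (-k, 1)
          + (-(Complex.I * (qNum q s (j' - k) * qNum q s (j - k)))) • bvec (nclSupp j j') (k + 2, 1)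
          + (Complex.I * (qNum q s (j' + k) * qNum q s (j + k))) • bvec (nclSupp j j') (k - 2, 1)))

/-!
The operators `R(I₂₁)` and `R(I₄₃)` are diagonal in the basis `|k,l⟩`, with eigenvalues
`ε₁[k+l]₊` and `ε₂[k-l]₊`. Since `q` is not a root of unity, `[a]₊ = [b]₊` forces `a = ±b`, and
on the index set of a nonclassical representation this pins down `(k,l)`: the joint eigenvalues
are simple. Lagrange interpolation in these operators then shows that an invariant subspace
containing a vector `x` contains every basis vector on which `x` is nonzero. Finally `R(I₃₂)`
sends `|k,l⟩` to a combination of its grid neighbours `|k±1,l⟩`, `|k,l±1⟩` (on the boundary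
row also of one reflected vector) with coefficients that are products of nonzero `q`-numbers,
and the index set is connected under this adjacency; so a nonzero invariant subspace contains
all basis vectors.
-/

section Diagonal

open Polynomial

variable {K ι : Type*} [Field K] [Fintype ι] [DecidableEq ι]

theorem aeval_apply_of_diagonal {A : Module.End K (ι → K)} {lam : ι → K}
    (hA : ∀ i, A (Pi.single i 1) = lam i • Pi.single i 1) (p : K[X]) (x : ι → K) :
    aeval A p x = fun i => p.eval (lam i) * x i := by
  conv_lhs => rw [← (Pi.basisFun K ι).sum_repr x]
  ext i
  simp [map_sum, Module.End.aeval_apply_of_mem_apply_eq_smul (hA _), Pi.single_apply, mul_comm]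

theorem Submodule.indicator_mem_of_diagonal {W : Submodule K (ι → K)}
    {A : Module.End K (ι → K)} {lam : ι → K}
    (hA : ∀ i, A (Pi.single i 1) = lam i • Pi.single i 1) (hW : ∀ x ∈ W, A x ∈ W)
    {x : ι → K} (hx : x ∈ W) (i : ι) :
    {i' | lam i' = lam i}.indicator x ∈ W := by
  set L := Lagrange.basis (Finset.univ.image lam) id (lam i)
  have hL (i' : ι) : L.eval (lam i') = if lam i' = lam i then 1 else 0 := by
    split_ifs with h
    · rw [h]; exact Lagrange.eval_basis_self (v := id) (i := lam i) (Set.injOn_id _) (by simp)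
    · exact Lagrange.eval_basis_of_ne (s := Finset.univ.image lam) (v := id) (Ne.symm h) (by simp)
  convert aeval_apply_smul_mem_of_le_comap hx L A hW using 1
  rw [aeval_apply_of_diagonal hA]
  ext i'
  simp [hL, Set.indicator_apply]

theorem Submodule.single_mem_of_separating {W : Submodule K (ι → K)}
    {A B : Module.End K (ι → K)} {lam mu : ι → K}
    (hA : ∀ i, A (Pi.single i 1) = lam i • Pi.single i 1)
    (hB : ∀ i, B (Pi.single i 1) = mu i • Pi.single i 1)
    (hWA : ∀ x ∈ W, A x ∈ W) (hWB : ∀ x ∈ W, B x ∈ W)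
    (hsep : ∀ i i', lam i = lam i' → mu i = mu i' → i = i') {x : ι → K} (hx : x ∈ W)
    (i : ι) :
    Pi.single i (x i) ∈ W := by
  have hmem := Submodule.indicator_mem_of_diagonal hB hWB
    (Submodule.indicator_mem_of_diagonal hA hWA hx i) i
  convert hmem using 1
  rw [Set.indicator_indicator]
  ext i'
  by_cases h : i' = i
  · subst h; simp
  · have : ¬(mu i' = mu i ∧ lam i' = lam i) := fun h' => h (hsep i' i h'.2 h'.1)
    simp_all

theorem Submodule.eq_top_of_reflTransGen {W : Submodule K (ι → K)}
    (hsingle : ∀ x ∈ W, ∀ i, Pi.single i (x i) ∈ W) {C : Module.End K (ι → K)}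
    (hC : ∀ x ∈ W, C x ∈ W) {r : ι → ι → Prop}
    (hr : ∀ i i', r i i' → C (Pi.single i 1) i' ≠ 0)
    (hconn : ∀ i i', Relation.ReflTransGen r i i') (hW : W ≠ ⊥) : W = ⊤ := by
  have hunit {x : ι → K} (hx : x ∈ W) {i : ι} (hxi : x i ≠ 0) : Pi.single i 1 ∈ W := by
    simpa [← Pi.single_smul, hxi] using W.smul_mem (x i)⁻¹ (hsingle x hx i)
  obtain ⟨x, hx, hx0⟩ := W.ne_bot_iff.mp hW
  obtain ⟨i, hi⟩ := Function.ne_iff.mp hx0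
  have hall (i' : ι) : Pi.single i' 1 ∈ W := by
    induction hconn i i' with
    | refl => exact hunit hx hi
    | tail _ hr' ih => exact hunit (hC _ ih) (hr _ _ hr')
  rw [eq_top_iff, ← (Pi.basisFun K ι).span_eq, Submodule.span_le]
  rintro _ ⟨i', rfl⟩
  simpa using hall i'

end Diagonal

theorem sub_inv_ne_zero_of_sq_ne_one {K : Type*} [Field K] {x : K} (hx0 : x ≠ 0)
    (hx2 : x ^ 2 ≠ 1) : x - x⁻¹ ≠ 0 := by
  intro h
  apply hx2
  field_simp at h
  linear_combination h

theorem zpow_right_inj_of_not_isOfFinOrder {G₀ : Type*} [GroupWithZero G₀] {x : G₀}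
    (hx0 : x ≠ 0) (hx : ¬IsOfFinOrder x) {m n : ℤ} : x ^ m = x ^ n ↔ m = n := by
  refine ⟨fun h => by_contra fun hmn => hx ?_, fun h => h ▸ rfl⟩
  refine isOfFinOrder_iff_zpow_eq_one.mpr ⟨m - n, sub_ne_zero.mpr hmn, ?_⟩
  rw [zpow_sub₀ hx0, h, div_self (zpow_ne_zero _ hx0)]

section QNumbers

variable {q s : ℂ}

theorem qNum_ne_zero (hs0 : s ≠ 0) (hs : ¬IsOfFinOrder s) (hq : q - q⁻¹ ≠ 0) {a : ℤ}
    (ha : a ≠ 0) : qNum q s a ≠ 0 := by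
  refine div_ne_zero (fun h => ha ?_) hq
  have := (zpow_right_inj_of_not_isOfFinOrder hs0 hs).mp (sub_eq_zero.mp h)
  omega

theorem qNumP_eq_qNumP (hs0 : s ≠ 0) (hs : ¬IsOfFinOrder s) (hq : q - q⁻¹ ≠ 0) {a b : ℤ}
    (h : qNumP q s a = qNumP q s b) : a = b ∨ a = -b := by
  have hsum : s ^ a + s ^ (-a) = s ^ b + s ^ (-b) := by
    rwa [qNumP, qNumP, div_left_inj' hq] at h
  have hprod : (s ^ a - s ^ b) * (s ^ (0 : ℤ) - s ^ (-a - b)) = 0 := by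
    have e1 : s ^ a * s ^ (-a - b) = s ^ (-b) := by rw [← zpow_add₀ hs0]; ring_nf
    have e2 : s ^ b * s ^ (-a - b) = s ^ (-a) := by rw [← zpow_add₀ hs0]; ring_nf
    linear_combination (zpow_zero s) * (s ^ a - s ^ b) + hsum - e1 + e2
  rcases mul_eq_zero.mp hprod with h | h
  · exact .inl ((zpow_right_inj_of_not_isOfFinOrder hs0 hs).mp (sub_eq_zero.mp h))
  · have := (zpow_right_inj_of_not_isOfFinOrder hs0 hs).mp (sub_eq_zero.mp h)
    exact .inr (by omega)

end QNumbers

theorem bvec_coe_eq_single {S : Finset (ℤ × ℤ)} (p : S) : bvec S p = Pi.single p 1 := by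
  funext b
  simp only [bvec, Pi.single_apply, ← Subtype.ext_iff]

theorem mem_nclSupp_iff {j j' : ℤ} (hadm : Adm j j') {k l : ℤ} :
    (k, l) ∈ nclSupp j j' ↔ (k - j) % 2 = 0 ∧ (l - j') % 2 = 0 ∧ -j ≤ k ∧ k ≤ j ∧
      -j' ≤ l ∧ l ≤ j' ∧ (j % 2 = 0 ∨ 0 < k) ∧ (j' % 2 = 0 ∨ 0 < l) := by
  unfold nclSupp
  rcases hadm with ⟨hj, hj', -⟩ | ⟨hj, hj', -⟩
  · simp only [if_pos hj, Finset.mem_filter, Finset.mem_product, Finset.mem_Icc]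
    omega
  · simp only [if_neg (by omega : ¬j % 2 = 1), Finset.mem_filter, Finset.mem_product,
      Finset.mem_Icc]
    omega

theorem eq_of_qNumP_eq_of_mem_nclSupp {q s : ℂ} (hs0 : s ≠ 0) (hs : ¬IsOfFinOrder s)
    (hq : q - q⁻¹ ≠ 0) {j j' : ℤ} (hadm : Adm j j') {k l k' l' : ℤ}
    (hp : (k, l) ∈ nclSupp j j') (hp' : (k', l') ∈ nclSupp j j')
    (hplus : qNumP q s (k + l) = qNumP q s (k' + l'))
    (hminus : qNumP q s (k - l) = qNumP q s (k' - l')) :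
    (k, l) = (k', l') := by
  have hplus := qNumP_eq_qNumP hs0 hs hq hplus
  have hminus := qNumP_eq_qNumP hs0 hs hq hminus
  rw [mem_nclSupp_iff hadm] at hp hp'
  unfold Adm at hadm
  simp only [Prod.mk.injEq]
  omega

def IsGridNeighbor (p p' : ℤ × ℤ) : Prop :=
  p' = (p.1, p.2 + 2) ∨ p' = (p.1, p.2 - 2) ∨ p' = (p.1 + 2, p.2) ∨ p' = (p.1 - 2, p.2)

theorem exists_isGridNeighbor_closer {j j' : ℤ} (hadm : Adm j j') {k l k' l' : ℤ}
    (hp : (k, l) ∈ nclSupp j j') (hp' : (k', l') ∈ nclSupp j j') (hne : (k, l) ≠ (k', l')) :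
    ∃ p ∈ nclSupp j j', IsGridNeighbor (k, l) p ∧
      (p.1 - k').natAbs + (p.2 - l').natAbs < (k - k').natAbs + (l - l').natAbs := by
  simp only [mem_nclSupp_iff hadm, ne_eq, Prod.mk.injEq] at hp hp' hne
  simp only [IsGridNeighbor, Prod.exists, Prod.mk.injEq, mem_nclSupp_iff hadm]
  rcases lt_trichotomy k k' with h | rfl | h
  · exact ⟨k + 2, l, by omega⟩
  · rcases lt_or_gt_of_ne (fun h => hne ⟨rfl, h⟩) with h | h
    · exact ⟨k, l + 2, by omega⟩
    · exact ⟨k, l - 2, by omega⟩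
  · exact ⟨k - 2, l, by omega⟩

theorem reflTransGen_isGridNeighbor {j j' : ℤ} (hadm : Adm j j') (p p' : nclSupp j j') :
    Relation.ReflTransGen (fun a b : nclSupp j j' => IsGridNeighbor a b) p p' := by
  induction h : (p.1.1 - p'.1.1).natAbs + (p.1.2 - p'.1.2).natAbs
    using Nat.strong_induction_on generalizing p with
  | _ n ih =>
    obtain ⟨⟨k, l⟩, hp⟩ := p
    obtain ⟨⟨k', l'⟩, hp'⟩ := p'
    by_cases hne : (k, l) = (k', l')
    · simp only [hne]; rfl
    obtain ⟨p'', hp'', hadj, hlt⟩ := exists_isGridNeighbor_closer hadm hp hp' hne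
    exact .head (b := ⟨p'', hp''⟩) hadj (ih _ (h ▸ hlt) _ rfl)

theorem apply_J32_bvec_ne_zero {q s ε1 ε2 ε3 : ℂ} (hs0 : s ≠ 0) (hs : ¬IsOfFinOrder s)
    (hq : q - q⁻¹ ≠ 0) {j j' : ℤ} (hadm : Adm j j')
    {R : UqSO4 q →ₐ[ℂ] Module.End ℂ (↥(nclSupp j j') → ℂ)}
    (hR : IsNclRep q s ε1 ε2 ε3 j j' R)
    {k l k' l' : ℤ} (hp : (k, l) ∈ nclSupp j j') (hp' : (k', l') ∈ nclSupp j j')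
    (hadj : IsGridNeighbor (k, l) (k', l')) :
    R (J32 q) (bvec (nclSupp j j') (k, l)) ⟨(k', l'), hp'⟩ ≠ 0 := by
  have hmem := (mem_nclSupp_iff hadm).mp hp
  have hmem' := (mem_nclSupp_iff hadm).mp hp'
  obtain ⟨-, hR32, hR32k, hR32l⟩ := hR
  simp only [IsGridNeighbor, Prod.mk.injEq] at hadj
  -- The parities on `nclSupp` keep the four targets of `R(I₃₂)|k,l⟩` apart, so the neighbour's
  -- coefficient survives alone; it is a product of `q`-numbers at nonzero arguments.
  rcases hadm with ⟨hj, hj', -⟩ | ⟨hj, hj', -⟩ <;>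
    [rcases eq_or_ne k 1 with rfl | hk; rcases eq_or_ne l 1 with rfl | hl] <;>
    (first
      | rw [hR32k hj _ hp]
      | rw [hR32l hj' _ hp]
      | rw [hR32 _ _ hp (by omega) (by omega)]) <;>
    rcases hadj with ⟨rfl, rfl⟩ | ⟨rfl, rfl⟩ | ⟨rfl, rfl⟩ | ⟨rfl, rfl⟩ <;>
    simp (disch := omega) [bvec, if_neg, qNum_ne_zero hs0 hs hq, hq, Complex.I_ne_zero] <;>
    omega

theorem stmt_8_general (q s : ℂ) (hq0 : q ≠ 0)
    (hroot : ∀ n : ℕ, 1 ≤ n → q ^ n ≠ 1) (hs : s ^ 2 = q)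
    (j j' : ℤ) (hadm : Adm j j')
    (ε1 ε2 ε3 : ℂ) (hε1 : ε1 = 1 ∨ ε1 = -1) (hε2 : ε2 = 1 ∨ ε2 = -1)
    (R : UqSO4 q →ₐ[ℂ] Module.End ℂ (↥(nclSupp j j') → ℂ))
    (hR : IsNclRep q s ε1 ε2 ε3 j j' R) :
    ∀ W : Submodule ℂ (↥(nclSupp j j') → ℂ),
      (∀ a : UqSO4 q, ∀ x ∈ W, R a x ∈ W) → W = ⊥ ∨ W = ⊤ := by
  intro W hW
  have hs0 : s ≠ 0 := by rintro rfl; exact hq0 (by simp [← hs])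
  have hqfin : ¬IsOfFinOrder q := fun h =>
    let ⟨n, hn, hqn⟩ := h.exists_pow_eq_one
    hroot n hn hqn
  have hsfin : ¬IsOfFinOrder s := fun h => hqfin (hs ▸ h.pow)
  have hq := sub_inv_ne_zero_of_sq_ne_one hq0 (hroot 2 (by norm_num))
  have hε1 : ε1 ≠ 0 := by rcases hε1 with rfl | rfl <;> norm_num
  have hε2 : ε2 ≠ 0 := by rcases hε2 with rfl | rfl <;> norm_num
  have hsep (p p' : nclSupp j j')
      (h21 : ε1 * qNumP q s (p.1.1 + p.1.2) = ε1 * qNumP q s (p'.1.1 + p'.1.2))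
      (h43 : ε2 * qNumP q s (p.1.1 - p.1.2) = ε2 * qNumP q s (p'.1.1 - p'.1.2)) : p = p' :=
    Subtype.ext (eq_of_qNumP_eq_of_mem_nclSupp hs0 hsfin hq hadm p.2 p'.2
      (mul_left_cancel₀ hε1 h21) (mul_left_cancel₀ hε2 h43))
  rcases eq_or_ne W ⊥ with hbot | hbot
  · exact .inl hbot
  refine .inr (W.eq_top_of_reflTransGen (fun x hx => W.single_mem_of_separating ?_ ?_
    (hW (J21 q)) (hW (J43 q)) hsep hx) (hW (J32 q)) ?_ (reflTransGen_isGridNeighbor hadm) hbot)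
  · exact fun p => bvec_coe_eq_single p ▸ (hR.1 _ _ p.2).1
  · exact fun p => bvec_coe_eq_single p ▸ (hR.1 _ _ p.2).2
  · exact fun p p' hadj =>
      bvec_coe_eq_single p ▸ apply_J32_bvec_ne_zero hs0 hsfin hq hadm hR p.2 p'.2 hadj

/-- first part of Theorem 3: if `q` is not a root of unity, the
nonclassical-type representations `R^{(ε1,ε2,ε3)}_{jj'}` of `U'_q(so_4)` are
irreducible. -/
theorem stmt_8 (q s : ℂ) (hq0 : q ≠ 0) (hq1 : q ≠ 1) (hqm1 : q ≠ -1)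
    (hroot : ∀ n : ℕ, 1 ≤ n → q ^ n ≠ 1) (hs : s ^ 2 = q)
    (j j' : ℤ) (hadm : Adm j j')
    (ε1 ε2 ε3 : ℂ) (hε1 : ε1 = 1 ∨ ε1 = -1) (hε2 : ε2 = 1 ∨ ε2 = -1)
    (hε3 : ε3 = 1 ∨ ε3 = -1)
    (R : UqSO4 q →ₐ[ℂ] Module.End ℂ (↥(nclSupp j j') → ℂ))
    (hR : IsNclRep q s ε1 ε2 ε3 j j' R) :
    ∀ W : Submodule ℂ (↥(nclSupp j j') → ℂ),
      (∀ a : UqSO4 q, ∀ x ∈ W, R a x ∈ W) → W = ⊥ ∨ W = ⊤ :=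
  stmt_8_general q s hq0 hroot hs j j' hadm ε1 ε2 ε3 hε1 hε2 R hR
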